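/- arXiv:1004.0532 — 6 statements merged into one kernel-verified Lean document; each statement's English description precedes it below -/
import Mathlib

section
/- Let G be a group, let X, Y, γ be elements of G, let n ≥ 1 be a natural number, and let I, J, K, L be natural numbers with I + J = n - 1 and K + L = n - 1. If γ·(XY)^I·X·γ⁻¹ = (YX)^L·Y and γ·(YX)^J·Y·γ⁻¹ = (XY)^K·X, then the element X·γ commutes with (XY)^n and the element Y·γ commutes with (YX)^n. -/
/-!
Put `P = (XY)^I X`, `Q = (YX)^J Y`, `P' = (YX)^L Y`, `Q' = (XY)^K X`. Then `PQ = Q'P' = (XY)^n`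
and `QP = P'Q' = (YX)^n`, so the hypotheses `γ P γ⁻¹ = P'`, `γ Q γ⁻¹ = Q'` give
`γ (XY)^n γ⁻¹ = (YX)^n` and `γ (YX)^n γ⁻¹ = (XY)^n`. Since moreover `X (YX)^n = (XY)^n X`,
the element `Xγ` first conjugates `(XY)^n` to `(YX)^n` and then back; symmetrically for `Yγ`.
-/

section Monoid

variable {M : Type*} [Monoid M]

lemma pow_mul_mul_pow_mul (a b : M) (i j : ℕ) :
    (a * b) ^ i * a * ((b * a) ^ j * b) = (a * b) ^ (i + j + 1) := by
  rw [mul_assoc ((a * b) ^ i), ← mul_assoc a, ← mul_pow_mul, pow_succ, pow_add]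
  simp only [mul_assoc]

lemma commute_mul_of_semiconjBy_pow {g a b : M} {n : ℕ}
    (h : SemiconjBy g ((a * b) ^ n) ((b * a) ^ n)) : Commute (a * g) ((a * b) ^ n) :=
  SemiconjBy.mul_left (mul_pow_mul a b n).symm h

end Monoid

lemma SemiconjBy.of_conj_eq {G : Type*} [Group G] {g x y : G} (h : g * x * g⁻¹ = y) :
    SemiconjBy g x y :=
  h ▸ SemiconjBy.conj_mk g x

theorem stmt_0 (G : Type*) [Group G] (X Y γ : G) (n : ℕ) (hn : 1 ≤ n)
    (I J K L : ℕ) (hIJ : I + J = n - 1) (hKL : K + L = n - 1)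
    (h1 : γ * (X * Y) ^ I * X * γ⁻¹ = (Y * X) ^ L * Y)
    (h2 : γ * (Y * X) ^ J * Y * γ⁻¹ = (X * Y) ^ K * X) :
    Commute (X * γ) ((X * Y) ^ n) ∧ Commute (Y * γ) ((Y * X) ^ n) := by
  have s1 : SemiconjBy γ ((X * Y) ^ I * X) ((Y * X) ^ L * Y) :=
    .of_conj_eq (by simpa only [mul_assoc] using h1)
  have s2 : SemiconjBy γ ((Y * X) ^ J * Y) ((X * Y) ^ K * X) :=
    .of_conj_eq (by simpa only [mul_assoc] using h2)
  have hXY : SemiconjBy γ ((X * Y) ^ n) ((Y * X) ^ n) := by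
    simpa only [pow_mul_mul_pow_mul, show I + J + 1 = n by omega, show L + K + 1 = n by omega]
      using s1.mul_right s2
  have hYX : SemiconjBy γ ((Y * X) ^ n) ((X * Y) ^ n) := by
    simpa only [pow_mul_mul_pow_mul, show J + I + 1 = n by omega, show K + L + 1 = n by omega]
      using s2.mul_right s1
  exact ⟨commute_mul_of_semiconjBy_pow hXY, commute_mul_of_semiconjBy_pow hYX⟩
end

section
/- Let F be a free group (FreeGroup α for some type α), let w ∈ F be nontrivial and not a proper power, let n ≥ 1 be a natural number, and let c ∈ F be an element commuting with w^n. Then c lies in the cyclic subgroup generated by w, i.e., c = w^u for some integer u. -/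
/-!
Free groups are torsion-free, so `n`-th roots are unique: `(c w c⁻¹)ⁿ = wⁿ` forces
`c w c⁻¹ = w`. Hence `c` commutes with `w` itself and `⟨c, w⟩` is abelian. By Nielsen–Schreier
it is free, and an abelian free group has at most one generator, so `⟨c, w⟩ = ⟨v⟩` for some `v`.
Writing `w = vʲ`, the hypothesis that `w` is not a proper power forces `j = ±1`, so
`c ∈ ⟨v⟩ = ⟨w⟩`.
-/

open FreeGroup Subgroup

def IsProperPower {G : Type*} [Group G] (w : G) : Prop :=
  ∃ (z : G) (k : ℤ), 2 ≤ |k| ∧ w = z ^ k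

theorem Commute.of_pow_right_of_isMulTorsionFree {G : Type*} [Group G] [IsMulTorsionFree G]
    {c w : G} {n : ℕ} (hn : n ≠ 0) (h : Commute c (w ^ n)) : Commute c w := by
  have hconj : (c * w * c⁻¹) ^ n = w ^ n := by rw [conj_pow, h.eq, mul_inv_cancel_right]
  exact mul_inv_eq_iff_eq_mul.mp (pow_left_injective hn hconj)

theorem FreeGroup.subsingleton_of_forall_commute {ι : Type*}
    (h : ∀ x y : FreeGroup ι, Commute x y) : Subsingleton ι := by
  classical
  refine ⟨fun a b => by_contra fun hab => ?_⟩
  let ψ : FreeGroup ι →* FreeGroup Bool := FreeGroup.lift fun i => of (decide (i = a))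
  have hψ := ((h (of a) (of b)).map ψ).eq
  simp only [ψ, lift_apply_of, decide_true, Ne.symm hab, decide_false] at hψ
  revert hψ
  decide

theorem IsFreeGroup.isCyclic_of_isMulCommutative (G : Type*) [Group G] [IsFreeGroup G]
    [IsMulCommutative G] : IsCyclic G := by
  let e := IsFreeGroup.toFreeGroup G
  have : Subsingleton (IsFreeGroup.Generators G) :=
    FreeGroup.subsingleton_of_forall_commute fun x y => by
      simpa [Commute, SemiconjBy] using congrArg e (mul_comm' (e.symm x) (e.symm y))
  have : IsCyclic (FreeGroup (IsFreeGroup.Generators G)) := by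
    rcases isEmpty_or_nonempty (IsFreeGroup.Generators G) with _ | ⟨⟨a⟩⟩
    · infer_instance
    · have := uniqueOfSubsingleton a
      infer_instance
  exact isCyclic_of_surjective e.symm e.symm.surjective

theorem FreeGroup.exists_mem_zpowers_of_commute {α : Type*} {x y : FreeGroup α}
    (h : Commute x y) : ∃ v, x ∈ zpowers v ∧ y ∈ zpowers v := by
  have : IsMulCommutative (closure {x, y}) := isMulCommutative_closure <| by
    rintro a (rfl | rfl) b (rfl | rfl)
    exacts [rfl, h.eq, h.symm.eq, rfl]
  obtain ⟨v, hv⟩ := (closure {x, y}).isCyclic_iff_exists_zpowers_eq_top.mp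
    (IsFreeGroup.isCyclic_of_isMulCommutative _)
  exact ⟨v, hv ▸ subset_closure (by simp), hv ▸ subset_closure (by simp)⟩

theorem mem_zpowers_of_zpow_eq_of_not_isProperPower {G : Type*} [Group G] {v w : G} {j : ℤ}
    (hw : ¬ IsProperPower w) (hj : v ^ j = w) : v ∈ zpowers w := by
  have hj0 : j ≠ 0 := by
    rintro rfl
    exact hw ⟨1, 2, by norm_num, by simp [← hj]⟩
  have hj1 : |j| = 1 :=
    le_antisymm (not_lt.mp fun h => hw ⟨v, j, h, hj.symm⟩) (Int.one_le_abs hj0)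
  rcases (abs_eq zero_le_one).mp hj1 with rfl | rfl
  · rw [← hj, zpow_one]
    exact mem_zpowers v
  · rw [← inv_inv v, ← hj, zpow_neg_one]
    exact inv_mem (mem_zpowers _)

theorem stmt_1_general {α : Type*} (w : FreeGroup α)
    (hnp : ¬ ∃ (z : FreeGroup α) (k : ℤ), 2 ≤ |k| ∧ w = z ^ k)
    (n : ℕ) (hn : 1 ≤ n) (c : FreeGroup α) (hc : Commute c (w ^ n)) :
    ∃ u : ℤ, c = w ^ u := by
  obtain ⟨v, hcv, hwv⟩ :=
    exists_mem_zpowers_of_commute (hc.of_pow_right_of_isMulTorsionFree (by omega))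
  obtain ⟨j, hj⟩ := mem_zpowers_iff.mp hwv
  have hvw : zpowers v ≤ zpowers w :=
    zpowers_le.mpr (mem_zpowers_of_zpow_eq_of_not_isProperPower hnp hj)
  obtain ⟨u, hu⟩ := mem_zpowers_iff.mp (hvw hcv)
  exact ⟨u, hu.symm⟩

theorem stmt_1 {α : Type*} (w : FreeGroup α) (hw : w ≠ 1)
    (hnp : ¬ ∃ (z : FreeGroup α) (k : ℤ), 2 ≤ |k| ∧ w = z ^ k)
    (n : ℕ) (hn : 1 ≤ n) (c : FreeGroup α) (hc : Commute c (w ^ n)) :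
    ∃ u : ℤ, c = w ^ u :=
  stmt_1_general w hnp n hn c hc
end

section
/- Let F be a free group and let X, Y ∈ F. If there exist integers u and v such that X⁻¹·(XY)^u = Y⁻¹·(YX)^v, then there exist an element z ∈ F and integers m and k such that X = z^m and Y = z^k. -/
/-!
With `c = X * Y` and `w = X⁻¹ * c ^ u`, the relation says `w = c ^ (v - 1) * X`, hence
`w ^ 2 = c ^ (u + v - 1)` commutes with `c`. Square roots are unique in a torsion-free group, so
`c` commutes with `w`, and then `X = c ^ u * w⁻¹` commutes with `Y = X⁻¹ * c`. In a free group
two commuting elements generate an abelian subgroup, which is free by Nielsen–Schreier and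
therefore cyclic.
-/

theorem FreeGroup.commute_of_of_iff {α : Type*} {a b : α} :
    Commute (FreeGroup.of a) (FreeGroup.of b) ↔ a = b := by
  classical
  refine ⟨fun h => ?_, fun h => h ▸ Commute.refl _⟩
  have h_words := congrArg FreeGroup.toWord h.eq
  simp only [FreeGroup.toWord_mul] at h_words
  exact (by simpa using h_words : a = b ∧ b = a).1

theorem Commute.of_zpow_right {G : Type*} [Group G] [IsMulTorsionFree G] {a b : G} {n : ℤ}
    (hn : n ≠ 0) (h : Commute a (b ^ n)) : Commute a b := by
  have : (a * b * a⁻¹) ^ n = b ^ n := by rw [conj_zpow, h.eq, mul_inv_cancel_right]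
  rw [commute_iff_eq, ← mul_inv_eq_iff_eq_mul, zpow_left_injective hn this]

namespace IsFreeGroup

variable {G : Type*} [Group G] [IsFreeGroup G]

theorem isCyclic_of_isMulCommutative_s2 [IsMulCommutative G] : IsCyclic G := by
  have : Subsingleton (Generators G) := ⟨fun a b => FreeGroup.commute_of_of_iff.mp <| by
    simpa using (show Commute ((toFreeGroup G).symm (.of a)) ((toFreeGroup G).symm (.of b)) from
      mul_comm' _ _).map (toFreeGroup G)⟩
  rw [MulEquiv.isCyclic (toFreeGroup G)]
  cases isEmpty_or_nonempty (Generators G)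
  · infer_instance
  · have := uniqueOfSubsingleton (Classical.arbitrary (Generators G))
    infer_instance

theorem exists_zpow_eq_of_commute {x y : G} (h : Commute x y) :
    ∃ (z : G) (m k : ℤ), x = z ^ m ∧ y = z ^ k := by
  set H := Subgroup.closure ({x, y} : Set G)
  have : IsMulCommutative H := Subgroup.isMulCommutative_closure <| by
    rintro a (rfl | rfl) b (rfl | rfl)
    exacts [rfl, h.eq, h.symm.eq, rfl]
  have := isCyclic_of_isMulCommutative_s2 (G := H)
  obtain ⟨g, hg⟩ := IsCyclic.exists_generator (α := H)
  obtain ⟨m, hm⟩ := Subgroup.mem_zpowers_iff.mp (hg ⟨x, Subgroup.subset_closure (by simp)⟩)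
  obtain ⟨k, hk⟩ := Subgroup.mem_zpowers_iff.mp (hg ⟨y, Subgroup.subset_closure (by simp)⟩)
  exact ⟨g, m, k, by simpa using congrArg Subtype.val hm.symm,
    by simpa using congrArg Subtype.val hk.symm⟩

end IsFreeGroup

theorem commute_of_inv_mul_zpow_eq {G : Type*} [Group G] [IsMulTorsionFree G] {X Y : G} {u v : ℤ}
    (h : X⁻¹ * (X * Y) ^ u = Y⁻¹ * (Y * X) ^ v) : Commute X Y := by
  set c := X * Y
  set w := X⁻¹ * c ^ u
  have hY : Y = X⁻¹ * c := by simp [c]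
  have hw : w = c ^ (v - 1) * X := by
    rw [show w = Y⁻¹ * (Y * X) ^ v from h, hY, show X⁻¹ * c * X = X⁻¹ * c * X⁻¹⁻¹ by simp,
      conj_zpow]
    group
  have hw_sq : w ^ (2 : ℤ) = c ^ (u + v - 1) := by
    calc w ^ (2 : ℤ) = c ^ (v - 1) * X * (X⁻¹ * c ^ u) := by rw [zpow_two]; nth_rw 1 [hw]
      _ = c ^ (u + v - 1) := by group
  have hcw : Commute c w :=
    Commute.of_zpow_right two_ne_zero (hw_sq ▸ (Commute.refl c).zpow_right _)
  have hXc : Commute X c := by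
    rw [show X = c ^ u * w⁻¹ by simp [w]]
    exact ((Commute.refl c).zpow_left u).mul_left hcw.inv_right.symm
  rw [hY]
  exact (Commute.refl X).inv_right.mul_right hXc

theorem stmt_2 {α : Type*} (X Y : FreeGroup α)
    (h : ∃ u v : ℤ, X⁻¹ * (X * Y) ^ u = Y⁻¹ * (Y * X) ^ v) :
    ∃ (z : FreeGroup α) (m k : ℤ), X = z ^ m ∧ Y = z ^ k := by
  obtain ⟨u, v, huv⟩ := h
  exact IsFreeGroup.exists_zpow_eq_of_commute (commute_of_inv_mul_zpow_eq huv)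
end

section
/- Let F be a free group and let x ∈ F be nontrivial. Then there exists an element m ∈ F such that x lies in the cyclic subgroup generated by m (Subgroup.zpowers m), and for every z ∈ F with x in the cyclic subgroup generated by z, the cyclic subgroup generated by z is contained in the cyclic subgroup generated by m. -/
/-!
The centralizer of `x ≠ 1` is a subgroup of a free group, hence free by Nielsen–Schreier, and `x`
is a nontrivial central element of it. A free group with a nontrivial central element has a single
generator, because the reduced word of an element commuting with a generator `a` only involves
`a`. So the centralizer is infinite cyclic, say generated by `m`, and every `z` with `x ∈ ⟨z⟩`
commutes with `x`, hence lies in `⟨m⟩`.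
-/

open Subgroup

theorem List.forall_mem_eq_of_cons_eq_append {β : Type*} {c : β} {t : List β}
    (h : c :: t = t ++ [c]) : ∀ u ∈ t, u = c := by
  have : Nonempty β := ⟨c⟩
  obtain ⟨b, hb⟩ :=
    (List.rotate_one_eq_self_iff_eq_replicate (l := c :: t)).mp (by simpa using h.symm)
  have hcb : c = b := List.eq_of_mem_replicate (hb ▸ List.mem_cons_self)
  intro u hu
  rw [hcb]
  exact List.eq_of_mem_replicate (hb ▸ List.mem_cons_of_mem c hu)

namespace FreeGroup

variable {α : Type*}

theorem fst_eq_of_mem_toWord_of_commute [DecidableEq α] {a : α} :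
    ∀ {x : FreeGroup α}, Commute x (of a) → ∀ p ∈ x.toWord, p.1 = a := by
  intro x
  induction hw : x.toWord generalizing x with
  | nil => simp
  | cons p t ih =>
    intro hx
    have ht : IsReduced t := isReduced_toWord.infix (hw ▸ List.suffix_cons p t).isInfix
    by_cases hp : p = (a, false)
    · subst hp
      have hmul : of a * x = mk t := by
        rw [← mk_toWord (x := x), hw, ← List.singleton_append, ← mul_mk,
          show mk [(a, false)] = (of a)⁻¹ from rfl, mul_inv_cancel_left]
      simpa using ih (x := of a * x) (by rw [hmul, toWord_mk, ht.reduce_eq])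
        ((Commute.refl _).mul_left hx)
    · -- `a * x` has word `a :: p :: t`, while the word of `x * a` is a sublist of
      -- `p :: t ++ [a]` of the same length, so `a :: p :: t = p :: t ++ [a]`.
      have hleft : (of a * x).toWord = (a, true) :: p :: t := by
        rw [toWord_mul, toWord_of, hw, List.singleton_append,
          (isReduced_cons_cons.mpr ⟨fun _ => ?_, hw ▸ isReduced_toWord⟩).reduce_eq]
        obtain ⟨c, _ | _⟩ := p <;> simp_all
      have hright : (x * of a).toWord = (p :: t) ++ [(a, true)] := by
        refine List.Sublist.eq_of_length ?_ ?_
        · simpa [toWord_of, hw] using toWord_mul_sublist x (of a)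
        · rw [hx.eq, hleft]; simp
      have hconst := List.forall_mem_eq_of_cons_eq_append
        (show (a, true) :: p :: t = (p :: t) ++ [(a, true)] by rw [← hleft, ← hright, hx.eq])
      exact fun q hq => by rw [hconst q hq]

theorem isCyclic_of_mem_center {x : FreeGroup α} (hx : x ∈ center (FreeGroup α)) (hx1 : x ≠ 1) :
    IsCyclic (FreeGroup α) := by
  classical
  obtain ⟨p, hp⟩ := List.exists_mem_of_ne_nil _ (mt toWord_eq_nil_iff.mp hx1)
  have hcomm (a : α) : Commute x (of a) := (mem_center_iff.mp hx (of a)).symm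
  have : Unique α :=
    { default := p.1
      uniq := fun a => (fst_eq_of_mem_toWord_of_commute (hcomm a) p hp).symm }
  infer_instance

end FreeGroup

theorem IsFreeGroup.isCyclic_of_mem_center {G : Type*} [Group G] [IsFreeGroup G] {x : G}
    (hx : x ∈ center G) (hx1 : x ≠ 1) : IsCyclic G := by
  let e := IsFreeGroup.toFreeGroup G
  have hex : e x ∈ center (FreeGroup (IsFreeGroup.Generators G)) :=
    mem_center_iff.mpr fun g => by
      rw [← e.apply_symm_apply g, ← map_mul, ← map_mul, mem_center_iff.mp hx]
  have := FreeGroup.isCyclic_of_mem_center hex (by simpa using hx1)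
  exact isCyclic_of_surjective e.symm e.symm.surjective

theorem IsFreeGroup.isCyclic_centralizer_singleton {G : Type*} [Group G] [IsFreeGroup G] {x : G}
    (hx : x ≠ 1) : IsCyclic (centralizer {x}) :=
  IsFreeGroup.isCyclic_of_mem_center (x := ⟨x, mem_centralizer_singleton_iff.mpr rfl⟩)
    (mem_center_iff.mpr fun g => Subtype.ext (mem_centralizer_singleton_iff.mp g.2))
    (by simpa [Subtype.ext_iff] using hx)

theorem stmt_7 {α : Type*} (x : FreeGroup α) (hx : x ≠ 1) :
    ∃ m : FreeGroup α, x ∈ Subgroup.zpowers m ∧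
      ∀ z : FreeGroup α, x ∈ Subgroup.zpowers z →
        Subgroup.zpowers z ≤ Subgroup.zpowers m := by
  obtain ⟨m, hm⟩ := (centralizer {x}).isCyclic_iff_exists_zpowers_eq_top.mp
    (IsFreeGroup.isCyclic_centralizer_singleton hx)
  refine ⟨m, hm ▸ mem_centralizer_singleton_iff.mpr rfl, fun z hz => ?_⟩
  obtain ⟨k, rfl⟩ := mem_zpowers_iff.mp hz
  rw [zpowers_le, hm, mem_centralizer_singleton_iff]
  exact (Commute.self_zpow z k).eq
end

section
/- In the free group F₄ on four generators a₁, a₂, a₃, a₄, let w = a₂⁻¹a₃a₁a₂⁻¹a₃a₁a₂⁻¹. For every element s ∈ F₄ that commutes with w, one has s·(a₂⁻¹a₂⁻¹a₃a₁)·s⁻¹ ≠ a₃a₁a₂⁻¹a₂⁻¹. -/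
/-!
The paper argues that the centralizer of `w` in the free group is `⟨w⟩`. A finite quotient is
enough instead: under the homomorphism `F₄ → S₅` sending `a₁, a₂, a₃, a₄` to `(3 4)`,
`(0 4 1 2 3)`, `(0 2 1)` and `1`, no permutation commuting with the image of `w` conjugates the
image of `a₂⁻¹a₂⁻¹a₃a₁` to that of `a₃a₁a₂⁻¹a₂⁻¹`, which is a finite check over `S₅`.
-/

/-- The generators of the free group on four generators:
`a 0 = a₁`, `a 1 = a₂`, `a 2 = a₃`, `a 3 = a₄`. -/
def a (i : Fin 4) : FreeGroup (Fin 4) := FreeGroup.of i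

theorem MonoidHom.mul_mul_inv_ne_of_map {G H : Type*} [Group G] [Group H] (φ : G →* H)
    {w u v : G} (hφ : ∀ t : H, Commute t (φ w) → t * φ u * t⁻¹ ≠ φ v)
    {s : G} (hs : Commute s w) : s * u * s⁻¹ ≠ v := fun h =>
  hφ (φ s) (hs.map φ) (by rw [← h, map_mul, map_mul, map_inv])

def permA₁ : Equiv.Perm (Fin 5) := Equiv.swap 3 4

def permA₂ : Equiv.Perm (Fin 5) :=
  ⟨![4, 2, 3, 0, 1], ![3, 4, 1, 2, 0], by decide, by decide⟩

def permA₃ : Equiv.Perm (Fin 5) :=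
  ⟨![2, 0, 1, 3, 4], ![1, 2, 0, 3, 4], by decide, by decide⟩

def freeGroupToPerm : FreeGroup (Fin 4) →* Equiv.Perm (Fin 5) :=
  FreeGroup.lift ![permA₁, permA₂, permA₃, 1]

set_option maxRecDepth 10000 in
theorem perm_centralizer_not_conj (t : Equiv.Perm (Fin 5))
    (ht : Commute t (permA₂⁻¹ * permA₃ * permA₁ * permA₂⁻¹ * permA₃ * permA₁ * permA₂⁻¹)) :
    t * (permA₂⁻¹ * permA₂⁻¹ * permA₃ * permA₁) * t⁻¹ ≠
      permA₃ * permA₁ * permA₂⁻¹ * permA₂⁻¹ := by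
  revert t
  unfold Commute SemiconjBy
  decide

theorem stmt_11 (s : FreeGroup (Fin 4))
    (hs : Commute s ((a 1)⁻¹ * a 2 * a 0 * (a 1)⁻¹ * a 2 * a 0 * (a 1)⁻¹)) :
    s * ((a 1)⁻¹ * (a 1)⁻¹ * a 2 * a 0) * s⁻¹ ≠
      a 2 * a 0 * (a 1)⁻¹ * (a 1)⁻¹ := by
  refine freeGroupToPerm.mul_mul_inv_ne_of_map (fun t ht => ?_) hs
  simp only [freeGroupToPerm, a, map_mul, map_inv, FreeGroup.lift_apply_of] at ht ⊢
  exact perm_centralizer_not_conj t ht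
end

section
/- In the free group F₄ on four generators a₁, a₂, a₃, a₄, let w = a₂⁻¹a₃a₁a₂⁻¹a₃a₁a₂⁻¹. For every integer k, one has w^k·(a₂⁻¹a₂⁻¹a₃a₁)·w^{-k} ≠ a₃a₁a₂⁻¹a₂⁻¹. -/
lemma zpow_mul_mul_zpow_neg_ne_of_pow_eq_one {G : Type*} [Group G] {g x y : G} {n : ℕ}
    (hn : 0 < n) (hg : g ^ n = 1) (hxy : ∀ j < n, g ^ j * x * (g ^ j)⁻¹ ≠ y) (k : ℤ) :
    g ^ k * x * g ^ (-k) ≠ y := by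
  have hn' : (0 : ℤ) < n := by exact_mod_cast hn
  obtain ⟨j, hj⟩ : ∃ j : ℕ, (j : ℤ) = k % n :=
    ⟨(k % n).toNat, Int.toNat_of_nonneg (Int.emod_nonneg k hn'.ne')⟩
  have hgk : g ^ k = g ^ j := by rw [zpow_eq_zpow_emod' k hg, ← hj, zpow_natCast]
  rw [zpow_neg, hgk]
  exact hxy j (by have := Int.emod_lt_of_pos k hn'; omega)

def toPermFinFour : FreeGroup (Fin 4) →* Equiv.Perm (Fin 4) :=
  FreeGroup.lift ![Equiv.swap 0 2, finRotate 4, Equiv.swap 0 1, 1]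

theorem stmt_12 (k : ℤ) :
    ((a 1)⁻¹ * a 2 * a 0 * (a 1)⁻¹ * a 2 * a 0 * (a 1)⁻¹) ^ k *
        ((a 1)⁻¹ * (a 1)⁻¹ * a 2 * a 0) *
        ((a 1)⁻¹ * a 2 * a 0 * (a 1)⁻¹ * a 2 * a 0 * (a 1)⁻¹) ^ (-k) ≠
      a 2 * a 0 * (a 1)⁻¹ * (a 1)⁻¹ := by
  refine ne_of_apply_ne toPermFinFour ?_
  simp only [map_mul, map_zpow, map_inv, a, toPermFinFour, FreeGroup.lift_apply_of]
  exact zpow_mul_mul_zpow_neg_ne_of_pow_eq_one two_pos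
    (by decide +kernel) (by decide +kernel) k
end
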